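/- arXiv:2410.13389 — 5 statements merged into one kernel-verified Lean document; each statement's English description precedes it below -/
import Mathlib

section
/- Let A be an n×n real matrix that is Hurwitz, i.e., every eigenvalue of its complexification has strictly negative real part. Then there exists a symmetric positive-definite n×n real matrix P satisfying the Lyapunov matrix equation P·A + Aᵀ·P = −I, where I is the identity matrix. -/
/-
Proof idea: on each generalized eigenspace of the complexification of `A`, with eigenvalue `μ`,
`exp (t • A)` acts as `e^{tμ}` times a polynomial in `t`; since the spectrum is finite, all
`Re μ < -ε` for some `ε > 0`, which absorbs the polynomials, so `‖exp (t • A)‖ = O(e^{-εt})`.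
Hence `F t = exp (t • Aᵀ) * exp (t • A)` is integrable on `(0, ∞)` and tends to `0`. Each `F t`
is positive definite, hence so is `P = ∫₀^∞ F`; and `F' = F * A + Aᵀ * F`, so the fundamental
theorem of calculus gives `P * A + Aᵀ * P = -F 0 = -1`.
-/

open Matrix

/-- A real square matrix is Hurwitz if every eigenvalue of its complexification
has strictly negative real part. -/
def IsHurwitz {n : ℕ} (A : Matrix (Fin n) (Fin n) ℝ) : Prop :=
  ∀ μ : ℂ, μ ∈ spectrum ℂ (A.map (Complex.ofReal)) → μ.re < 0

open NormedSpace Asymptotics Filter MeasureTheory Set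
open scoped Topology Nat

attribute [local instance] Matrix.linftyOpNormedAddCommGroup Matrix.linftyOpNormedRing
  Matrix.linftyOpNormedAlgebra

/- The product topology on matrices agrees with the topology of the `ℓ∞`-operator norm only after
unfolding `WithLp`, so instance search would not match them; registering the norm's topology makes
the normed-algebra API (`exp`, Bochner integrals) apply to matrices directly. -/
noncomputable abbrev Matrix.linftyOpTopology {m n α : Type*} [Fintype m] [Fintype n]
    [NormedAddCommGroup α] : TopologicalSpace (Matrix m n α) :=
  Matrix.linftyOpNormedAddCommGroup.toUniformSpace.toTopologicalSpace

attribute [local instance] Matrix.linftyOpTopology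

theorem isBigO_pow_mul_exp_atTop (j : ℕ) {a b : ℝ} (hab : a < b) :
    (fun t : ℝ => t ^ j * Real.exp (a * t)) =O[atTop] fun t => Real.exp (b * t) := by
  refine ((isLittleO_pow_exp_pos_mul_atTop j (sub_pos.2 hab)).isBigO.mul
    (isBigO_refl (fun t : ℝ => Real.exp (a * t)) atTop)).congr_right fun t => ?_
  rw [← Real.exp_add]; ring_nf

theorem integrableOn_Ioi_of_isBigO_exp_neg {E : Type*} [NormedAddCommGroup E] {f : ℝ → E}
    {a b : ℝ} (hb : 0 < b) (hf : Continuous f) (ho : f =O[atTop] fun t => Real.exp (-b * t)) :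
    IntegrableOn f (Ioi a) :=
  (integrable_norm_iff hf.aestronglyMeasurable).1
    (integrable_of_isBigO_exp_neg hb hf.norm.continuousOn ho.norm_left)

theorem tendsto_zero_of_isBigO_exp_neg {E : Type*} [NormedAddCommGroup E] {f : ℝ → E} {b : ℝ}
    (hb : 0 < b) (ho : f =O[atTop] fun t => Real.exp (-b * t)) : Tendsto f atTop (𝓝 0) :=
  ho.trans_tendsto <| Real.tendsto_exp_atBot.comp <|
    tendsto_id.const_mul_atTop_of_neg (neg_neg_iff_pos.2 hb)

theorem ContinuousLinearMap.map_integral_Ioi_eq_neg {E : Type*} [NormedAddCommGroup E]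
    [NormedSpace ℝ E] [CompleteSpace E] (L : E →L[ℝ] E) {F : ℝ → E} {a : ℝ}
    (hF : ∀ t ∈ Ici a, HasDerivAt F (L (F t)) t) (hint : IntegrableOn F (Ioi a))
    (hlim : Tendsto F atTop (𝓝 0)) : L (∫ t in Ioi a, F t) = -F a := by
  rw [← L.integral_comp_comm hint,
    integral_Ioi_of_hasDerivAt_of_tendsto' hF (L.integrable_comp hint) hlim, zero_sub]

namespace Matrix

theorem linfty_opNorm_le_sum_norm_mulVec_single {m n α : Type*} [Fintype m] [Fintype n]
    [DecidableEq n] [NormedRing α] (M : Matrix m n α) : ‖M‖ ≤ ∑ j, ‖M *ᵥ Pi.single j 1‖ := by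
  have hnn : ‖M‖₊ ≤ ∑ j, ‖M *ᵥ Pi.single j 1‖₊ := by
    rw [linfty_opNNNorm_def]
    refine Finset.sup_le fun i _ => Finset.sum_le_sum fun j _ => ?_
    simpa [mulVec_single] using nnnorm_le_pi_nnnorm (M *ᵥ Pi.single j 1) i
  simpa only [← coe_nnnorm, NNReal.coe_sum] using NNReal.coe_le_coe.2 hnn

theorem linfty_opNorm_map_eq {m n α β : Type*} [Fintype m] [Fintype n] [NormedAddCommGroup α]
    [NormedAddCommGroup β] (M : Matrix m n α) (f : α → β) (hf : ∀ a, ‖f a‖ = ‖a‖) :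
    ‖M.map f‖ = ‖M‖ := by
  have hf' (a : α) : ‖f a‖₊ = ‖a‖₊ := NNReal.eq (hf a)
  simp only [← coe_nnnorm, linfty_opNNNorm_def, map_apply, hf']

variable {ι : Type*} [Fintype ι] [DecidableEq ι]

theorem spectrum_transpose {R : Type*} [CommRing R] (M : Matrix ι ι R) :
    spectrum R Mᵀ = spectrum R M := by
  ext μ
  rw [spectrum.mem_iff, spectrum.mem_iff, ← isUnit_transpose (_ - M), transpose_sub,
    Algebra.algebraMap_eq_smul_one, transpose_smul, transpose_one]

theorem map_exp_ofReal (A : Matrix ι ι ℝ) :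
    (exp A).map Complex.ofReal = exp (A.map Complex.ofReal) :=
  map_exp ((Algebra.ofId ℝ ℂ).mapMatrix (m := ι))
    (continuous_id.matrix_map Complex.continuous_ofReal) A

theorem exp_smul_mulVec_eq_sum_of_pow_mulVec_eq_zero {N : Matrix ι ι ℂ} {v : ι → ℂ} {k : ℕ}
    (hv : (N ^ k) *ᵥ v = 0) (s : ℂ) :
    exp (s • N) *ᵥ v = ∑ j ∈ Finset.range k, (s ^ j / j !) • (N ^ j *ᵥ v) := by
  have hseries := (exp_series_hasSum_exp' (𝕂 := ℂ) (s • N)).map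
    (mulVec.addMonoidHomLeft v) (continuous_id.matrix_mulVec continuous_const)
  refine hseries.unique (hasSum_sum_of_ne_finset_zero fun j hj => ?_) |>.trans
    (Finset.sum_congr rfl fun j _ => ?_)
  · have hkj : N ^ j = N ^ (j - k) * N ^ k := by
      rw [← pow_add, Nat.sub_add_cancel (by simpa using hj)]
    simp [mulVec.addMonoidHomLeft, smul_pow, smul_mulVec, hkj, ← mulVec_mulVec, hv]
  · simp [mulVec.addMonoidHomLeft, smul_pow, smul_mulVec, smul_smul, div_eq_inv_mul]

theorem exp_smul_eq_exp_mul_smul_exp_smul_sub (B : Matrix ι ι ℂ) (μ s : ℂ) :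
    exp (s • B) = Complex.exp (s * μ) • exp (s • (B - μ • 1)) := by
  have hB : s • B = algebraMap ℂ _ (s * μ) + s • (B - μ • 1) := by
    rw [Algebra.algebraMap_eq_smul_one, smul_sub, smul_smul]; abel
  have hexp : exp (algebraMap ℂ (Matrix ι ι ℂ) (s * μ)) = algebraMap ℂ _ (Complex.exp (s * μ)) := by
    rw [Complex.exp_eq_exp_ℂ]; exact (algebraMap_exp_comm (s * μ)).symm
  rw [hB, NormedSpace.exp_add_of_commute (Algebra.commute_algebraMap_left _ _), hexp,
    ← Algebra.smul_def]

theorem isBigO_exp_smul_mulVec_of_pow_mulVec_eq_zero {B : Matrix ι ι ℂ} {μ : ℂ} {k : ℕ}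
    {v : ι → ℂ} (hv : ((B - μ • 1) ^ k) *ᵥ v = 0) {ε : ℝ} (hμ : μ.re < -ε) :
    (fun t : ℝ => exp ((t : ℂ) • B) *ᵥ v) =O[atTop] fun t => Real.exp (-ε * t) := by
  simp_rw [exp_smul_eq_exp_mul_smul_exp_smul_sub B μ, smul_mulVec,
    exp_smul_mulVec_eq_sum_of_pow_mulVec_eq_zero hv, Finset.smul_sum, smul_smul]
  refine IsBigO.fun_sum fun j _ => (isBigO_of_le' (c := ‖(B - μ • 1) ^ j *ᵥ v‖ / j !) _
    fun t => le_of_eq ?_).trans (isBigO_pow_mul_exp_atTop j hμ)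
  rw [norm_smul, norm_mul, Complex.norm_exp, Complex.re_ofReal_mul, norm_div, norm_pow,
    Complex.norm_real, Complex.norm_natCast, norm_mul, norm_pow,
    Real.norm_of_nonneg (Real.exp_pos _).le]
  field_simp

theorem exists_pow_sub_smul_one_mulVec_eq_zero_of_mem_maxGenEigenspace {B : Matrix ι ι ℂ}
    {μ : ℂ} {w : ι → ℂ} (hw : w ∈ Module.End.maxGenEigenspace (toLinAlgEquiv' B) μ) :
    ∃ k, ((B - μ • 1) ^ k) *ᵥ w = 0 := by
  obtain ⟨k, hk⟩ := (Module.End.mem_maxGenEigenspace _ μ w).1 hw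
  refine ⟨k, ?_⟩
  rwa [← map_one toLinAlgEquiv', ← map_smul, ← map_sub, ← map_pow] at hk

theorem mem_spectrum_of_mem_maxGenEigenspace {B : Matrix ι ι ℂ} {μ : ℂ} {w : ι → ℂ}
    (hw : w ∈ Module.End.maxGenEigenspace (toLinAlgEquiv' B) μ) (hw0 : w ≠ 0) :
    μ ∈ spectrum ℂ B := by
  obtain ⟨k, hk⟩ := (Module.End.mem_maxGenEigenspace _ μ w).1 hw
  rw [← AlgEquiv.spectrum_eq toLinAlgEquiv']
  refine (Module.End.hasEigenvalue_of_hasGenEigenvalue (k := k) ?_).mem_spectrum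
  exact (Submodule.ne_bot_iff _).2 ⟨w, (Module.End.mem_genEigenspace_nat ..).2 hk, hw0⟩

theorem isBigO_exp_smul_mulVec {B : Matrix ι ι ℂ} {ε : ℝ}
    (hB : ∀ μ ∈ spectrum ℂ B, μ.re < -ε) (v : ι → ℂ) :
    (fun t : ℝ => exp ((t : ℂ) • B) *ᵥ v) =O[atTop] fun t => Real.exp (-ε * t) := by
  have hv : v ∈ ⨆ μ, Module.End.maxGenEigenspace (toLinAlgEquiv' B) μ := by
    rw [Module.End.iSup_maxGenEigenspace_eq_top]; trivial
  induction hv using Submodule.iSup_induction' with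
  | mem μ w hw =>
    rcases eq_or_ne w 0 with rfl | hw0
    · simp only [mulVec_zero]; exact isBigO_zero _ _
    obtain ⟨k, hk⟩ := exists_pow_sub_smul_one_mulVec_eq_zero_of_mem_maxGenEigenspace hw
    exact isBigO_exp_smul_mulVec_of_pow_mulVec_eq_zero hk
      (hB μ (mem_spectrum_of_mem_maxGenEigenspace hw hw0))
  | zero => simp only [mulVec_zero]; exact isBigO_zero _ _
  | add w₁ w₂ _ _ h₁ h₂ => simpa [mulVec_add] using h₁.add h₂

theorem isBigO_exp_smul {B : Matrix ι ι ℂ} {ε : ℝ} (hB : ∀ μ ∈ spectrum ℂ B, μ.re < -ε) :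
    (fun t : ℝ => exp ((t : ℂ) • B)) =O[atTop] fun t => Real.exp (-ε * t) := by
  have hcols : (fun t : ℝ => ∑ j, ‖exp ((t : ℂ) • B) *ᵥ Pi.single j 1‖) =O[atTop]
      fun t => Real.exp (-ε * t) :=
    IsBigO.fun_sum fun j _ => (isBigO_exp_smul_mulVec hB (Pi.single j 1)).norm_left
  refine IsBigO.trans (isBigO_of_le _ fun t => ?_) hcols
  exact (linfty_opNorm_le_sum_norm_mulVec_single _).trans (Real.le_norm_self _)

theorem isBigO_exp_smul_of_real {A : Matrix ι ι ℝ} {ε : ℝ}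
    (hA : ∀ μ ∈ spectrum ℂ (A.map Complex.ofReal), μ.re < -ε) :
    (fun t : ℝ => exp (t • A)) =O[atTop] fun t => Real.exp (-ε * t) := by
  refine IsBigO.trans (isBigO_of_le _ fun t => le_of_eq ?_) (isBigO_exp_smul hA)
  rw [← linfty_opNorm_map_eq (exp (t • A)) Complex.ofReal Complex.norm_real, map_exp_ofReal]
  congr 2
  ext i j
  simp

theorem hasDerivAt_exp_smul_transpose_mul_exp_smul (A : Matrix ι ι ℝ) (t : ℝ) :
    HasDerivAt (fun s : ℝ => exp (s • Aᵀ) * exp (s • A))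
      (exp (t • Aᵀ) * exp (t • A) * A + Aᵀ * (exp (t • Aᵀ) * exp (t • A))) t := by
  refine ((hasDerivAt_exp_smul_const' Aᵀ t).mul (hasDerivAt_exp_smul_const A t)).congr_deriv ?_
  rw [add_comm, mul_assoc, mul_assoc]

theorem posDef_exp_smul_transpose_mul_exp_smul (A : Matrix ι ι ℝ) (t : ℝ) :
    (exp (t • Aᵀ) * exp (t • A)).PosDef := by
  have hT : exp (t • Aᵀ) = (exp (t • A))ᴴ := by
    rw [conjTranspose_eq_transpose_of_trivial, ← transpose_smul]; exact exp_transpose _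
  rw [hT]
  exact .conjTranspose_mul_self _ (mulVec_injective_iff_isUnit.2 (isUnit_exp _))

theorem PosDef.integral {X : Type*} [MeasurableSpace X] {μ : Measure X} (hμ : μ ≠ 0)
    {F : X → Matrix ι ι ℝ} (hF : Integrable F μ) (hpos : ∀ x, (F x).PosDef) :
    (∫ x, F x ∂μ).PosDef := by
  let transposeCLM : Matrix ι ι ℝ →L[ℝ] Matrix ι ι ℝ :=
    LinearMap.toContinuousLinearMap (transposeLinearEquiv ι ι ℝ ℝ).toLinearMap
  refine .of_dotProduct_mulVec_pos ?_ fun v hv => ?_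
  · rw [isHermitian_iff_isSymm]
    exact (transposeCLM.integral_comp_comm hF).symm.trans <| integral_congr_ae <|
      ae_of_all _ fun x => (isHermitian_iff_isSymm.1 (hpos x).isHermitian).eq
  let quadCLM : Matrix ι ι ℝ →L[ℝ] ℝ := LinearMap.toContinuousLinearMap
    { toFun := fun M => v ⬝ᵥ (M *ᵥ v)
      map_add' := fun M N => by simp [add_mulVec, dotProduct_add]
      map_smul' := fun c M => by simp [smul_mulVec, dotProduct_smul] }
  have hquad : v ⬝ᵥ ((∫ x, F x ∂μ) *ᵥ v) = ∫ x, v ⬝ᵥ (F x *ᵥ v) ∂μ :=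
    (quadCLM.integral_comp_comm hF).symm
  have hF_pos (x : X) : 0 < v ⬝ᵥ (F x *ᵥ v) := by
    simpa using (hpos x).dotProduct_mulVec_pos hv
  rw [star_trivial, hquad, integral_pos_iff_support_of_nonneg (fun x => (hF_pos x).le)
    (quadCLM.integrable_comp hF), Function.support_eq_univ fun x => (hF_pos x).ne']
  exact Measure.measure_univ_pos.2 hμ

end Matrix

theorem IsHurwitz.exists_pos_forall_re_lt {n : ℕ} {A : Matrix (Fin n) (Fin n) ℝ}
    (hA : IsHurwitz A) : ∃ ε > 0, ∀ μ ∈ spectrum ℂ (A.map Complex.ofReal), μ.re < -ε := by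
  have hev : ∀ᶠ ε in 𝓝 (0 : ℝ), ∀ μ ∈ spectrum ℂ (A.map Complex.ofReal), μ.re < -ε :=
    (Matrix.finite_spectrum _).eventually_all.2 fun μ hμ =>
      (eventually_lt_nhds (neg_pos.2 (hA μ hμ))).mono fun ε hε => by linarith
  exact ((hev.filter_mono (nhdsWithin_le_nhds (s := Ioi 0))).and self_mem_nhdsWithin).exists.imp
    fun ε h => ⟨h.2, h.1⟩

/-- For a Hurwitz matrix `A`, there exists a symmetric positive-definite matrix `P`
solving the Lyapunov equation `P·A + Aᵀ·P = -I`. -/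
theorem lyapunov_equation_solution {n : ℕ} (A : Matrix (Fin n) (Fin n) ℝ)
    (hA : IsHurwitz A) :
    ∃ P : Matrix (Fin n) (Fin n) ℝ,
      P.IsSymm ∧ P.PosDef ∧ P * A + Aᵀ * P = -(1 : Matrix (Fin n) (Fin n) ℝ) := by
  obtain ⟨ε, hε, hspec⟩ := hA.exists_pos_forall_re_lt
  set F : ℝ → Matrix (Fin n) (Fin n) ℝ := fun t => exp (t • Aᵀ) * exp (t • A)
  have hdecay : F =O[atTop] fun t => Real.exp (-(2 * ε) * t) := by
    have hT := isBigO_exp_smul_of_real (A := Aᵀ) (ε := ε)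
      (by rwa [transpose_map, spectrum_transpose])
    refine (hT.mul (isBigO_exp_smul_of_real hspec)).congr_right fun t => ?_
    rw [← Real.exp_add]; ring_nf
  have hderiv (t : ℝ) := hasDerivAt_exp_smul_transpose_mul_exp_smul A t
  have hint : IntegrableOn F (Ioi 0) := integrableOn_Ioi_of_isBigO_exp_neg (by positivity)
    (continuous_iff_continuousAt.2 fun t => (hderiv t).continuousAt) hdecay
  have hP : (∫ t in Ioi 0, F t).PosDef :=
    PosDef.integral (by simp) hint (posDef_exp_smul_transpose_mul_exp_smul A)
  refine ⟨_, isHermitian_iff_isSymm.1 hP.isHermitian, hP, ?_⟩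
  have hlyap := ((ContinuousLinearMap.mul ℝ _).flip A + ContinuousLinearMap.mul ℝ _ Aᵀ)
    |>.map_integral_Ioi_eq_neg (fun t _ => hderiv t) hint
      (tendsto_zero_of_isBigO_exp_neg (by positivity) hdecay)
  simpa [F] using hlyap
end

section
/- Let ρ : ℝ → ℝ be differentiable and suppose there exists m > 0 with ρ'(x) ≥ m for all x ∈ ℝ. Let γ > 0, let u* ∈ ℝ be fixed, and let u : ℝ → ℝ be differentiable and satisfy the estimation law u̇(t) = γ·ρ'(u(t))·(ρ(u*) − ρ(u(t))) for all t ≥ 0. Then the estimation error ũ(t) = u* − u(t) converges exponentially to zero: |u(t) − u*| ≤ |u(0) − u*|·exp(−γ·m²·t) for all t ≥ 0. -/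
/-!
`V = (u - u*)²` is a Lyapunov function. By the mean value theorem `ρ` is strongly monotone,
`(ρ x - ρ y)(x - y) ≥ m (x - y)²`, and together with `ρ' ≥ m` this gives
`V̇ = -2γ ρ'(u) (ρ u - ρ u*)(u - u*) ≤ -2γm² V`. Grönwall's inequality yields
`V t ≤ V 0 · exp (-2γm² t)`, and taking square roots gives the claim.
-/

open Real

theorem le_mul_exp_of_hasDerivAt_le_mul {f f' : ℝ → ℝ} {K a : ℝ}
    (hf : ∀ x, a ≤ x → HasDerivAt f (f' x) x) (bound : ∀ x, a ≤ x → f' x ≤ K * f x) :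
    ∀ x, a ≤ x → f x ≤ f a * exp (K * (x - a)) := by
  intro x hax
  have := le_gronwallBound_of_liminf_deriv_right_le (f := f) (f' := f') (ε := 0) (b := x)
    (fun y hy => (hf y hy.1).continuousAt.continuousWithinAt)
    (fun y hy _ hr => (hf y hy.1).hasDerivWithinAt.liminf_right_slope_le hr) le_rfl
    (fun y hy => by simpa using bound y hy.1) x ⟨hax, le_rfl⟩
  rwa [gronwallBound_ε0] at this

section StrongMonotone

variable {ρ : ℝ → ℝ} (hρ : Differentiable ℝ ρ) {m : ℝ} (hderiv : ∀ x, m ≤ deriv ρ x)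
include hρ hderiv

theorem mul_sq_le_sub_mul_sub_of_le_deriv (x y : ℝ) :
    m * (x - y) ^ 2 ≤ (ρ x - ρ y) * (x - y) := by
  rcases le_total y x with hyx | hxy
  · have := mul_sub_le_image_sub_of_le_deriv hρ hderiv hyx
    nlinarith
  · have := mul_sub_le_image_sub_of_le_deriv hρ hderiv hxy
    nlinarith

theorem sq_mul_sq_le_deriv_mul_sub_mul_sub (hm : 0 ≤ m) (x y : ℝ) :
    m ^ 2 * (x - y) ^ 2 ≤ deriv ρ x * ((ρ x - ρ y) * (x - y)) := by
  rw [sq m, mul_assoc]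
  exact mul_le_mul (hderiv x) (mul_sq_le_sub_mul_sub_of_le_deriv hρ hderiv x y)
    (by positivity) (hm.trans (hderiv x))

end StrongMonotone

/-- Exponential convergence of the dynamic mapping inversion (scalar, time-invariant case):
if `ρ` is differentiable with `ρ' ≥ m > 0` and `u` obeys the estimation law
`u̇ = γ·ρ'(u)·(ρ(u*) − ρ(u))`, then `|u(t) − u*| ≤ |u(0) − u*|·exp(−γ·m²·t)` for `t ≥ 0`. -/
theorem mapping_inversion_exponential_convergence
    (ρ : ℝ → ℝ) (hρ : Differentiable ℝ ρ)
    (m : ℝ) (hm : 0 < m) (hderiv : ∀ x : ℝ, m ≤ deriv ρ x)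
    (γ : ℝ) (hγ : 0 < γ) (ustar : ℝ)
    (u : ℝ → ℝ)
    (hu : ∀ t : ℝ, 0 ≤ t →
      HasDerivAt u (γ * deriv ρ (u t) * (ρ ustar - ρ (u t))) t) :
    ∀ t : ℝ, 0 ≤ t →
      |u t - ustar| ≤ |u 0 - ustar| * Real.exp (-(γ * m ^ 2) * t) := by
  have hV : ∀ s, 0 ≤ s → HasDerivAt (fun s => (u s - ustar) ^ 2)
      (2 * (u s - ustar) * (γ * deriv ρ (u s) * (ρ ustar - ρ (u s)))) s := fun s hs => by
    simpa using ((hu s hs).sub_const ustar).fun_pow 2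
  have hdissipation : ∀ s, 2 * (u s - ustar) * (γ * deriv ρ (u s) * (ρ ustar - ρ (u s)))
      ≤ 2 * -(γ * m ^ 2) * (u s - ustar) ^ 2 := fun s => by
    nlinarith [mul_le_mul_of_nonneg_left
      (sq_mul_sq_le_deriv_mul_sub_mul_sub hρ hderiv hm.le (u s) ustar) hγ.le]
  intro t ht
  have hgronwall := le_mul_exp_of_hasDerivAt_le_mul hV (fun s _ => hdissipation s) t ht
  rw [sub_zero] at hgronwall
  refine abs_le_of_sq_le_sq ?_ (by positivity)
  rwa [mul_pow, sq_abs, ← exp_nat_mul, Nat.cast_ofNat, ← mul_assoc]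
end

section
/- Let ρ : ℝ → ℝ be differentiable, μ : ℝ → ℝ, and suppose there exists σ₀ > 0 with μ(x)·ρ'(x) ≥ σ₀ for all x ∈ ℝ. Let γ > 0, fix v ∈ ℝ, and let u : ℝ → ℝ be differentiable with u̇(t) = γ·μ(u(t))·(v − ρ(u(t))) for all t ≥ 0. Then |v − ρ(u(t))| ≤ |v − ρ(u(0))|·exp(−γ·σ₀·t) for all t ≥ 0; that is, ρ(u(t)) converges to the demanded virtual input v exponentially fast, even if ρ is not injective. -/
/-! The tracking error `e = v - ρ ∘ u` satisfies `ė = -γ·(μ·ρ')(u)·e`, so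
`e·ė ≤ -γσ₀·e²` no matter whether `ρ` is injective. Hence `e(t)²·exp(2γσ₀t)` is
antitone on `[0, ∞)`, which is the exponential bound. -/

open Real Set

theorem antitoneOn_sq_mul_exp_of_mul_deriv_le {f f' : ℝ → ℝ} {c : ℝ}
    (hf : ∀ t, 0 ≤ t → HasDerivAt f (f' t) t)
    (hdecay : ∀ t, 0 ≤ t → f t * f' t ≤ -c * f t ^ 2) :
    AntitoneOn (fun t => f t ^ 2 * exp (2 * c * t)) (Ici 0) := by
  have hderiv : ∀ t, 0 ≤ t → HasDerivAt (fun t => f t ^ 2 * exp (2 * c * t))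
      (2 * exp (2 * c * t) * (f t * f' t + c * f t ^ 2)) t := by
    intro t ht
    have hexp : HasDerivAt (fun t => exp (2 * c * t)) (exp (2 * c * t) * (2 * c)) t := by
      simpa using ((hasDerivAt_id t).const_mul (2 * c)).exp
    exact (((hf t ht).fun_pow 2).fun_mul hexp).congr_deriv (by ring)
  apply antitoneOn_of_deriv_nonpos (convex_Ici 0)
  · exact fun t ht => (hderiv t ht).continuousAt.continuousWithinAt
  · rw [interior_Ici]
    exact fun t ht => (hderiv t (le_of_lt ht)).differentiableAt.differentiableWithinAt
  · rw [interior_Ici]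
    intro t ht
    rw [(hderiv t (le_of_lt ht)).deriv]
    have hdecay_t := hdecay t (le_of_lt ht)
    exact mul_nonpos_of_nonneg_of_nonpos (by positivity) (by linarith)

theorem abs_le_mul_exp_of_mul_deriv_le {f f' : ℝ → ℝ} {c : ℝ}
    (hf : ∀ t, 0 ≤ t → HasDerivAt f (f' t) t)
    (hdecay : ∀ t, 0 ≤ t → f t * f' t ≤ -c * f t ^ 2) {t : ℝ} (ht : 0 ≤ t) :
    |f t| ≤ |f 0| * exp (-c * t) := by
  have hanti : f t ^ 2 * exp (2 * c * t) ≤ f 0 ^ 2 := by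
    simpa using antitoneOn_sq_mul_exp_of_mul_deriv_le hf hdecay self_mem_Ici ht ht
  have hsq : f t ^ 2 ≤ (|f 0| * exp (-c * t)) ^ 2 := calc
    f t ^ 2 = f t ^ 2 * exp (2 * c * t) * exp (-c * t) ^ 2 := by
      rw [mul_assoc, sq (exp _), ← exp_add, ← exp_add,
        show 2 * c * t + (-c * t + -c * t) = 0 by ring, exp_zero, mul_one]
    _ ≤ f 0 ^ 2 * exp (-c * t) ^ 2 := by gcongr
    _ = (|f 0| * exp (-c * t)) ^ 2 := by rw [mul_pow, sq_abs]
  simpa [abs_of_nonneg (by positivity : 0 ≤ |f 0| * exp (-c * t))] using sq_le_sq.mp hsq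

theorem mapping_inversion_virtual_input_convergence_general
    (ρ : ℝ → ℝ) (hρ : Differentiable ℝ ρ)
    (μ : ℝ → ℝ) (σ₀ : ℝ)
    (hcond : ∀ x : ℝ, σ₀ ≤ μ x * deriv ρ x)
    (γ : ℝ) (hγ : 0 < γ) (v : ℝ)
    (u : ℝ → ℝ)
    (hu : ∀ t : ℝ, 0 ≤ t → HasDerivAt u (γ * μ (u t) * (v - ρ (u t))) t) :
    ∀ t : ℝ, 0 ≤ t →
      |v - ρ (u t)| ≤ |v - ρ (u 0)| * Real.exp (-(γ * σ₀) * t) := by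
  intro t ht
  have herror : ∀ s, 0 ≤ s → HasDerivAt (fun s => v - ρ (u s))
      (-(γ * (μ (u s) * deriv ρ (u s))) * (v - ρ (u s))) s := by
    intro s hs
    exact ((((hρ (u s)).hasDerivAt).comp s (hu s hs)).const_sub v).congr_deriv (by ring)
  refine abs_le_mul_exp_of_mul_deriv_le herror (fun s _ => ?_) ht
  have hgain : γ * σ₀ ≤ γ * (μ (u s) * deriv ρ (u s)) :=
    mul_le_mul_of_nonneg_left (hcond (u s)) hγ.le
  nlinarith [mul_le_mul_of_nonneg_right hgain (sq_nonneg (v - ρ (u s)))]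

/-- Remark 1: even if `ρ` is not injective, the dynamic mapping inversion
`u̇ = γ·μ(u)·(v − ρ(u))` drives `ρ(u(t))` to the demanded virtual input `v`
exponentially fast, provided `μ(x)·ρ'(x) ≥ σ₀ > 0`. -/
theorem mapping_inversion_virtual_input_convergence
    (ρ : ℝ → ℝ) (hρ : Differentiable ℝ ρ)
    (μ : ℝ → ℝ) (σ₀ : ℝ) (hσ₀ : 0 < σ₀)
    (hcond : ∀ x : ℝ, σ₀ ≤ μ x * deriv ρ x)
    (γ : ℝ) (hγ : 0 < γ) (v : ℝ)
    (u : ℝ → ℝ)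
    (hu : ∀ t : ℝ, 0 ≤ t → HasDerivAt u (γ * μ (u t) * (v - ρ (u t))) t) :
    ∀ t : ℝ, 0 ≤ t →
      |v - ρ (u t)| ≤ |v - ρ (u 0)| * Real.exp (-(γ * σ₀) * t) :=
  mapping_inversion_virtual_input_convergence_general ρ hρ μ σ₀ hcond γ hγ v u hu
end

section
/- Let ρ : ℝ → ℝ be differentiable with ρ'(x) ≥ m > 0 for all x ∈ ℝ, let γ > 0, and let u* : ℝ → ℝ be differentiable with |u̇*(t)| ≤ d for all t ≥ 0, for some d ≥ 0. Let u : ℝ → ℝ be differentiable and satisfy u̇(t) = γ·ρ'(u(t))·(ρ(u*(t)) − ρ(u(t))) for all t ≥ 0. Then the estimation error ũ(t) = u*(t) − u(t) satisfies |ũ(t)| ≤ |ũ(0)|·exp(−γ·m²·t) + d/(γ·m²) for all t ≥ 0; in particular, ũ is globally uniformly ultimately bounded with ultimate bound d/(γ·m²). -/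
open Set Filter Real
open scoped Topology

/-!
Along a solution, the error `ũ = u* − u` has Lyapunov derivative
`ũ·ũ̇ = ũ·u̇* − γ·ρ'(u)·(ρ(u*) − ρ(u))·ũ ≤ |ũ|·d − γ·m²·ũ²`, because `ρ' ≥ m` makes `ρ` strongly
monotone: `m·(a − b)² ≤ (ρ a − ρ b)·(a − b)`. Hence the right Dini derivative of `|ũ|` is at most
`−γ·m²·|ũ| + d` (at a zero of `ũ` it is `|u̇*|`), and Gronwall's inequality gives the bound.
-/

theorem mul_sq_sub_le_of_le_deriv {f : ℝ → ℝ} (hf : Differentiable ℝ f) {C : ℝ}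
    (hf' : ∀ x, C ≤ deriv f x) (a b : ℝ) : C * (a - b) ^ 2 ≤ (f a - f b) * (a - b) := by
  rcases le_total b a with hba | hab
  · nlinarith [mul_sub_le_image_sub_of_le_deriv hf hf' hba]
  · nlinarith [mul_sub_le_image_sub_of_le_deriv hf hf' hab]

theorem sub_mul_gradient_error_le {ρ : ℝ → ℝ} (hρ : Differentiable ℝ ρ) {m γ : ℝ} (hm : 0 ≤ m)
    (hderiv : ∀ x, m ≤ deriv ρ x) (hγ : 0 ≤ γ) {a b v d : ℝ} (hv : |v| ≤ d) :
    (a - b) * (v - γ * deriv ρ b * (ρ a - ρ b)) ≤ |a - b| * (-(γ * m ^ 2) * |a - b| + d) := by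
  have hmono : γ * m * (m * (a - b) ^ 2) ≤ γ * deriv ρ b * ((ρ a - ρ b) * (a - b)) :=
    mul_le_mul (mul_le_mul_of_nonneg_left (hderiv b) hγ) (mul_sq_sub_le_of_le_deriv hρ hderiv a b)
      (by positivity) (mul_nonneg hγ (hm.trans (hderiv b)))
  have hdrift : (a - b) * v ≤ |a - b| * d :=
    calc (a - b) * v ≤ |a - b| * |v| := (le_abs_self _).trans (abs_mul _ _).le
      _ ≤ |a - b| * d := mul_le_mul_of_nonneg_left hv (abs_nonneg _)
  calc (a - b) * (v - γ * deriv ρ b * (ρ a - ρ b))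
      = (a - b) * v - γ * deriv ρ b * ((ρ a - ρ b) * (a - b)) := by ring
    _ ≤ |a - b| * d - γ * m * (m * (a - b) ^ 2) := by linarith
    _ = |a - b| * (-(γ * m ^ 2) * |a - b| + d) := by rw [← sq_abs (a - b)]; ring

theorem tendsto_slope_abs_nhdsGT {g : ℝ → ℝ} {g' x : ℝ} (hg : HasDerivAt g g' x) :
    Tendsto (slope (fun y ↦ |g y|) x) (𝓝[>] x)
      (𝓝 (if g x = 0 then |g'| else SignType.sign (g x) * g')) := by
  split_ifs with h0
  · refine (hg.tendsto_slope.mono_left (nhdsGT_le_nhdsNE x)).abs.congr' ?_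
    filter_upwards [self_mem_nhdsWithin] with z (hz : x < z)
    rw [slope_def_field, slope_def_field, h0, abs_zero, sub_zero, sub_zero, abs_div,
      abs_of_pos (sub_pos.2 hz)]
  · have habs : HasDerivAt (fun y ↦ |g y|) (SignType.sign (g x) * g') x :=
      (hasDerivAt_abs h0).comp x hg
    exact habs.tendsto_slope.mono_left (nhdsGT_le_nhdsNE x)

theorem abs_le_gronwallBound_of_mul_deriv_le {g g' : ℝ → ℝ} {K ε a b : ℝ}
    (hc : ContinuousOn g (Icc a b)) (hg : ∀ x ∈ Ico a b, HasDerivAt g (g' x) x)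
    (hzero : ∀ x ∈ Ico a b, g x = 0 → |g' x| ≤ ε)
    (hV : ∀ x ∈ Ico a b, g x * g' x ≤ |g x| * (K * |g x| + ε)) :
    ∀ x ∈ Icc a b, |g x| ≤ gronwallBound |g a| K ε (x - a) := by
  refine le_gronwallBound_of_liminf_deriv_right_le (f' := fun x ↦
      if g x = 0 then |g' x| else SignType.sign (g x) * g' x) hc.abs ?_ le_rfl ?_
  · intro x hx r hr
    have hslope := tendsto_slope_abs_nhdsGT (hg x hx)
    exact (hslope.eventually (gt_mem_nhds hr)).frequently.mono fun z hz ↦ by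
      rwa [slope_def_field, div_eq_inv_mul] at hz
  · intro x hx
    split_ifs with h0
    · simpa [h0] using hzero x hx h0
    · have hpos : 0 < |g x| := abs_pos.2 h0
      refine le_of_mul_le_mul_left ?_ hpos
      calc |g x| * (SignType.sign (g x) * g' x) = g x * g' x := by
            rw [← mul_assoc, abs_mul_sign]
        _ ≤ |g x| * (K * |g x| + ε) := hV x hx

theorem gronwallBound_le_of_neg {δ K ε : ℝ} (hK : K < 0) (hε : 0 ≤ ε) (x : ℝ) :
    gronwallBound δ K ε x ≤ δ * exp (K * x) + ε / -K := by
  rw [gronwallBound_of_K_ne_0 hK.ne]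
  have hεK : ε / K ≤ 0 := div_nonpos_of_nonneg_of_nonpos hε hK.le
  have := exp_pos (K * x)
  rw [div_neg]
  nlinarith

/-- Input-to-state-stability of the input estimation-error subsystem Σ₂: with the gradient
choice `μ = ρ'`, `ρ' ≥ m > 0`, adaptation gain `γ > 0` and time-varying ideal input `u*` with
`|u̇*| ≤ d`, the estimation error `ũ = u* − u` of the law
`u̇ = γ·ρ'(u)·(ρ(u*) − ρ(u))` satisfies
`|ũ(t)| ≤ |ũ(0)|·exp(−γ·m²·t) + d/(γ·m²)` for all `t ≥ 0` (global uniform ultimate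
boundedness with ultimate bound `d/(γ·m²)`). -/
theorem mapping_inversion_iss
    (ρ : ℝ → ℝ) (hρ : Differentiable ℝ ρ)
    (m : ℝ) (hm : 0 < m) (hderiv : ∀ x : ℝ, m ≤ deriv ρ x)
    (γ : ℝ) (hγ : 0 < γ)
    (ustar : ℝ → ℝ) (hustar : Differentiable ℝ ustar)
    (d : ℝ) (hd : 0 ≤ d) (hrate : ∀ t : ℝ, 0 ≤ t → |deriv ustar t| ≤ d)
    (u : ℝ → ℝ)
    (hu : ∀ t : ℝ, 0 ≤ t →
      HasDerivAt u (γ * deriv ρ (u t) * (ρ (ustar t) - ρ (u t))) t) :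
    ∀ t : ℝ, 0 ≤ t →
      |ustar t - u t| ≤
        |ustar 0 - u 0| * Real.exp (-(γ * m ^ 2) * t) + d / (γ * m ^ 2) := by
  intro T hT
  have herr : ∀ t, 0 ≤ t → HasDerivAt (fun s ↦ ustar s - u s)
      (deriv ustar t - γ * deriv ρ (u t) * (ρ (ustar t) - ρ (u t))) t :=
    fun t ht ↦ (hustar t).hasDerivAt.sub (hu t ht)
  have hzero : ∀ t ∈ Ico 0 T, ustar t - u t = 0 →
      |deriv ustar t - γ * deriv ρ (u t) * (ρ (ustar t) - ρ (u t))| ≤ d := by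
    intro t ht h0
    rw [sub_eq_zero.1 h0, sub_self, mul_zero, sub_zero]
    exact hrate t ht.1
  have hgron := abs_le_gronwallBound_of_mul_deriv_le
    (fun t ht ↦ (herr t ht.1).continuousAt.continuousWithinAt) (fun t ht ↦ herr t ht.1) hzero
    (fun t ht ↦ sub_mul_gradient_error_le hρ hm.le hderiv hγ.le (hrate t ht.1)) T ⟨hT, le_rfl⟩
  rw [sub_zero] at hgron
  calc |ustar T - u T| ≤ _ := hgron
    _ ≤ _ := gronwallBound_le_of_neg (neg_lt_zero.2 (by positivity)) hd T
    _ = _ := by rw [neg_neg]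
end

section
/- Let M and P be n×n real matrices with P symmetric, P·M + Mᵀ·P = −I, and m·‖x‖² ≤ xᵀ·P·x ≤ M̄·‖x‖² for all x ∈ ℝⁿ with 0 < m ≤ M̄. Let w : ℝ → ℝⁿ be continuous with ‖w(t)‖ ≤ w̄ for all t ≥ 0, for some w̄ ≥ 0, and let e : ℝ → ℝⁿ be differentiable with ė(t) = M·e(t) + w(t) for all t ≥ 0. Then the solution e is globally uniformly ultimately bounded; specifically, limsup_{t→∞} ‖e(t)‖ ≤ 2·‖P‖·w̄·√(M̄/m), where ‖P‖ denotes the operator norm of P. -/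
/-!
`V(t) = ⟪e t, P (e t)⟫` is a Lyapunov function: by the Lyapunov equation,
`V' = -‖e‖² + ⟪w, P e⟫ + ⟪e, P w⟫ ≤ -‖e‖² + 2‖P‖ w̄ ‖e‖`. For `r > 2‖P‖ w̄`, above the level
`M̄ r²` we have `‖e‖ ≥ r`, so there `V' ≤ -r (r - 2‖P‖ w̄) < 0`. Hence `V` drops below that level
in finite time and never exceeds it again, which gives `m ‖e‖² ≤ M̄ r²` eventually. Letting
`r ↓ 2‖P‖ w̄` bounds the limsup.
-/

open Matrix Filter Set
open scoped RealInnerProductSpace Topology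

section Comparison

variable {V V' : ℝ → ℝ} {a L δ : ℝ}

theorem exists_le_of_hasDerivAt_le_neg {b : ℝ} (hδ : 0 < δ)
    (hV : ∀ t, a ≤ t → HasDerivAt V (V' t) t) (hb : ∀ t, a ≤ t → b ≤ V t)
    (hV' : ∀ t, a ≤ t → L ≤ V t → V' t ≤ -δ) : ∃ t₀, a ≤ t₀ ∧ V t₀ ≤ L := by
  by_contra! hL
  set T := a + (V a - b) / δ + 1
  have hT : a ≤ T := by
    have : 0 ≤ (V a - b) / δ := div_nonneg (sub_nonneg.2 (hb a le_rfl)) hδ.le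
    linarith
  have hdecay : V T ≤ V a - δ * (T - a) := by
    refine image_le_of_deriv_right_le_deriv_boundary
      (B := fun t ↦ V a - δ * (t - a)) (B' := fun _ ↦ -δ)
      (fun t ht ↦ (hV t ht.1).continuousAt.continuousWithinAt)
      (fun t ht ↦ (hV t ht.1).hasDerivWithinAt) (by simp) (by fun_prop)
      (fun t _ ↦ ?_) (fun t ht ↦ hV' t ht.1 (hL t ht.1).le) ⟨hT, le_rfl⟩
    simpa using ((hasDerivAt_id t).sub_const a).const_mul δ |>.const_sub (V a) |>.hasDerivWithinAt
  have hδT : δ * (T - a) = V a - b + δ := by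
    simp only [T]; field_simp; ring
  linarith [hb T hT]

theorem le_of_hasDerivAt_neg_of_eq (hV : ∀ t, a ≤ t → HasDerivAt V (V' t) t)
    (hV' : ∀ t, a ≤ t → V t = L → V' t < 0) (ha : V a ≤ L) {t : ℝ} (ht : a ≤ t) : V t ≤ L :=
  image_le_of_deriv_right_lt_deriv_boundary' (B' := 0)
    (fun s hs ↦ (hV s hs.1).continuousAt.continuousWithinAt)
    (fun s hs ↦ (hV s hs.1).hasDerivWithinAt) ha continuousOn_const
    (fun _ _ ↦ hasDerivWithinAt_const _ _ L) (fun s hs ↦ hV' s hs.1) ⟨ht, le_rfl⟩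

theorem eventually_le_of_hasDerivAt_le_neg {b : ℝ} (hδ : 0 < δ)
    (hV : ∀ t, a ≤ t → HasDerivAt V (V' t) t) (hb : ∀ t, a ≤ t → b ≤ V t)
    (hV' : ∀ t, a ≤ t → L ≤ V t → V' t ≤ -δ) : ∀ᶠ t in atTop, V t ≤ L := by
  obtain ⟨t₀, ha, ht₀⟩ := exists_le_of_hasDerivAt_le_neg hδ hV hb hV'
  refine eventually_atTop.2 ⟨t₀, fun t ht ↦ le_of_hasDerivAt_neg_of_eq
    (fun s hs ↦ hV s (ha.trans hs)) (fun s hs hVs ↦ ?_) ht₀ ht⟩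
  linarith [hV' s (ha.trans hs) hVs.ge]

end Comparison

section Lyapunov

variable {E : Type*} [NormedAddCommGroup E] [InnerProductSpace ℝ E]

theorem HasDerivAt.inner_apply_self {P : E →L[ℝ] E} {e : ℝ → E} {e' : E} {t : ℝ}
    (he : HasDerivAt e e' t) :
    HasDerivAt (fun s ↦ ⟪e s, P (e s)⟫) (⟪e t, P e'⟫ + ⟪e', P (e t)⟫) t :=
  he.inner ℝ (P.hasFDerivAt.comp_hasDerivAt t he)

theorem lyapunov_derivative_le {A P : E →L[ℝ] E}
    (hAP : ∀ x, ⟪A x, P x⟫ + ⟪x, P (A x)⟫ = -‖x‖ ^ 2) (x w : E) :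
    ⟪A x + w, P x⟫ + ⟪x, P (A x + w)⟫ ≤ -‖x‖ ^ 2 + 2 * ‖P‖ * ‖w‖ * ‖x‖ := by
  have hw : ⟪w, P x⟫ ≤ ‖P‖ * ‖w‖ * ‖x‖ := calc
    ⟪w, P x⟫ ≤ ‖w‖ * ‖P x‖ := real_inner_le_norm _ _
    _ ≤ ‖w‖ * (‖P‖ * ‖x‖) := by gcongr; exact P.le_opNorm x
    _ = ‖P‖ * ‖w‖ * ‖x‖ := by ring
  have hw' : ⟪x, P w⟫ ≤ ‖P‖ * ‖w‖ * ‖x‖ := calc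
    ⟪x, P w⟫ ≤ ‖x‖ * ‖P w‖ := real_inner_le_norm _ _
    _ ≤ ‖x‖ * (‖P‖ * ‖w‖) := by gcongr; exact P.le_opNorm w
    _ = ‖P‖ * ‖w‖ * ‖x‖ := by ring
  rw [map_add, inner_add_left, inner_add_right]
  linarith [hAP x]

theorem eventually_norm_le_of_lyapunov {A P : E →L[ℝ] E} {m Mb c r : ℝ} (hm : 0 < m)
    (hMb : 0 < Mb) (hAP : ∀ x, ⟪A x, P x⟫ + ⟪x, P (A x)⟫ = -‖x‖ ^ 2)
    (hlow : ∀ x, m * ‖x‖ ^ 2 ≤ ⟪x, P x⟫) (hupp : ∀ x, ⟪x, P x⟫ ≤ Mb * ‖x‖ ^ 2)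
    {w e : ℝ → E} (hw : ∀ t, 0 ≤ t → 2 * ‖P‖ * ‖w t‖ ≤ c)
    (he : ∀ t, 0 ≤ t → HasDerivAt e (A (e t) + w t) t) (hcr : c < r) :
    ∀ᶠ t in atTop, ‖e t‖ ≤ r * √(Mb / m) := by
  have hr : 0 < r := ((by positivity : 0 ≤ 2 * ‖P‖ * ‖w 0‖).trans (hw 0 le_rfl)).trans_lt hcr
  have hV_nonneg : ∀ t, 0 ≤ t → 0 ≤ ⟪e t, P (e t)⟫ :=
    fun t _ ↦ (by positivity : 0 ≤ m * ‖e t‖ ^ 2).trans (hlow _)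
  have hV' : ∀ t, 0 ≤ t → Mb * r ^ 2 ≤ ⟪e t, P (e t)⟫ →
      ⟪e t, P (A (e t) + w t)⟫ + ⟪A (e t) + w t, P (e t)⟫ ≤ -(r * (r - c)) := by
    intro t ht hVt
    have hre : r ≤ ‖e t‖ :=
      (pow_le_pow_iff_left₀ hr.le (norm_nonneg _) two_ne_zero).1
        (le_of_mul_le_mul_left (hVt.trans (hupp _)) hMb)
    have hdV := lyapunov_derivative_le hAP (e t) (w t)
    have hwe := mul_le_mul_of_nonneg_right (hw t ht) (norm_nonneg (e t))
    nlinarith [mul_nonneg (sub_nonneg.2 hre) (by linarith : 0 ≤ ‖e t‖ + r - c)]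
  filter_upwards [eventually_le_of_hasDerivAt_le_neg (mul_pos hr (sub_pos.2 hcr))
    (fun t ht ↦ (he t ht).inner_apply_self) hV_nonneg hV'] with t hVt
  refine (pow_le_pow_iff_left₀ (norm_nonneg _) (by positivity) two_ne_zero).1 ?_
  rw [mul_pow, Real.sq_sqrt (by positivity), mul_div, le_div_iff₀ hm]
  nlinarith [hlow (e t)]

end Lyapunov

theorem Matrix.inner_toEuclideanCLM_lyapunov {ι : Type*} [Fintype ι] [DecidableEq ι]
    {M P : Matrix ι ι ℝ} (h : P * M + Mᵀ * P = -1) (x : EuclideanSpace ℝ ι) :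
    ⟪toEuclideanCLM (𝕜 := ℝ) M x, toEuclideanCLM (𝕜 := ℝ) P x⟫
      + ⟪x, toEuclideanCLM (𝕜 := ℝ) P (toEuclideanCLM (𝕜 := ℝ) M x)⟫ = -‖x‖ ^ 2 := by
  have hM : ⟪toEuclideanCLM (𝕜 := ℝ) M x, toEuclideanCLM (𝕜 := ℝ) P x⟫
      = ⟪x, toEuclideanCLM (𝕜 := ℝ) Mᵀ (toEuclideanCLM (𝕜 := ℝ) P x)⟫ := by
    rw [← ContinuousLinearMap.adjoint_inner_right, ← ContinuousLinearMap.star_eq_adjoint,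
      ← map_star, star_eq_conjTranspose, conjTranspose_eq_transpose_of_trivial]
  have hLyap := congrArg (fun A ↦ ⟪x, toEuclideanCLM (𝕜 := ℝ) A x⟫) h
  simp only [map_add, map_mul, map_neg, map_one, _root_.add_apply, mul_apply_eq_comp,
    _root_.neg_apply, one_apply_eq_self, inner_add_right, inner_neg_right,
    real_inner_self_eq_norm_sq] at hLyap
  linarith

theorem perturbed_lyapunov_uub_general {n : ℕ}
    (M P : Matrix (Fin n) (Fin n) ℝ)
    (hLyap : P * M + Mᵀ * P = -(1 : Matrix (Fin n) (Fin n) ℝ))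
    (m Mb : ℝ) (hm : 0 < m) (hmM : m ≤ Mb)
    (hlow : ∀ x : EuclideanSpace ℝ (Fin n),
      m * ‖x‖ ^ 2 ≤ ⟪x, Matrix.toEuclideanCLM (𝕜 := ℝ) P x⟫)
    (hupp : ∀ x : EuclideanSpace ℝ (Fin n),
      ⟪x, Matrix.toEuclideanCLM (𝕜 := ℝ) P x⟫ ≤ Mb * ‖x‖ ^ 2)
    (w : ℝ → EuclideanSpace ℝ (Fin n))
    (wbar : ℝ) (hw : ∀ t : ℝ, 0 ≤ t → ‖w t‖ ≤ wbar)
    (e : ℝ → EuclideanSpace ℝ (Fin n))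
    (he : ∀ t : ℝ, 0 ≤ t →
      HasDerivAt e (Matrix.toEuclideanCLM (𝕜 := ℝ) M (e t) + w t) t) :
    limsup (fun t : ℝ => ‖e t‖) atTop ≤
      2 * ‖Matrix.toEuclideanCLM (𝕜 := ℝ) P‖ * wbar * Real.sqrt (Mb / m) := by
  set c := 2 * ‖Matrix.toEuclideanCLM (𝕜 := ℝ) P‖ * wbar
  have hbound : ∀ r ∈ Ioi c, limsup (fun t ↦ ‖e t‖) atTop ≤ r * √(Mb / m) := fun r hr ↦
    limsup_le_of_le (isCoboundedUnder_le_of_le atTop fun t ↦ norm_nonneg (e t))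
      (eventually_norm_le_of_lyapunov hm (hm.trans_le hmM) (inner_toEuclideanCLM_lyapunov hLyap)
        hlow hupp (fun t ht ↦ mul_le_mul_of_nonneg_left (hw t ht) (by positivity)) he hr)
  refine ge_of_tendsto (x := 𝓝[>] c) ?_ (eventually_nhdsWithin_of_forall hbound)
  exact ((continuous_id.mul continuous_const).tendsto' c _ rfl).mono_left nhdsWithin_le_nhds

/-- Global uniform ultimate boundedness of the perturbed tracking-error dynamics: if `P` is
symmetric with `P·M + Mᵀ·P = −I` and `m‖x‖² ≤ xᵀPx ≤ M̄‖x‖²` (`0 < m ≤ M̄`), and the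
perturbation `w` is continuous with `‖w(t)‖ ≤ w̄`, then every solution of `ė = M e + w`
satisfies `limsup_{t→∞} ‖e(t)‖ ≤ 2‖P‖·w̄·√(M̄/m)`, `‖P‖` being the operator norm of `P`. -/
theorem perturbed_lyapunov_uub {n : ℕ}
    (M P : Matrix (Fin n) (Fin n) ℝ) (hPsymm : P.IsSymm)
    (hLyap : P * M + Mᵀ * P = -(1 : Matrix (Fin n) (Fin n) ℝ))
    (m Mb : ℝ) (hm : 0 < m) (hmM : m ≤ Mb)
    (hlow : ∀ x : EuclideanSpace ℝ (Fin n),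
      m * ‖x‖ ^ 2 ≤ ⟪x, Matrix.toEuclideanCLM (𝕜 := ℝ) P x⟫)
    (hupp : ∀ x : EuclideanSpace ℝ (Fin n),
      ⟪x, Matrix.toEuclideanCLM (𝕜 := ℝ) P x⟫ ≤ Mb * ‖x‖ ^ 2)
    (w : ℝ → EuclideanSpace ℝ (Fin n)) (hwcont : Continuous w)
    (wbar : ℝ) (hwbar : 0 ≤ wbar) (hw : ∀ t : ℝ, 0 ≤ t → ‖w t‖ ≤ wbar)
    (e : ℝ → EuclideanSpace ℝ (Fin n))
    (he : ∀ t : ℝ, 0 ≤ t →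
      HasDerivAt e (Matrix.toEuclideanCLM (𝕜 := ℝ) M (e t) + w t) t) :
    limsup (fun t : ℝ => ‖e t‖) atTop ≤
      2 * ‖Matrix.toEuclideanCLM (𝕜 := ℝ) P‖ * wbar * Real.sqrt (Mb / m) :=
  perturbed_lyapunov_uub_general M P hLyap m Mb hm hmM hlow hupp w wbar hw e he
end
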